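/- Let T be a Frobenius monad on a dagger category C. If f : (A, a) → (B, b) is a morphism of FEM-algebras, then f† : B → A is a morphism of FEM-algebras (B, b) → (A, a); hence the dagger of C restricts to a dagger on the full subcategory of FEM-algebras in the Eilenberg–Moore category C^T, commuting with the forgetful functor to C. -/

import Mathlib

open CategoryTheory Category MonoidalCategory

universe v u

/-- A dagger structure on a category: a contravariant, identity-on-objects,
involutive operation on morphisms. -/
class DaggerStruct (C : Type u) [Category.{v} C] where
  dag : ∀ {X Y : C}, (X ⟶ Y) → (Y ⟶ X)
  dag_dag : ∀ {X Y : C} (f : X ⟶ Y), dag (dag f) = f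
  dag_id : ∀ X : C, dag (𝟙 X) = 𝟙 X
  dag_comp : ∀ {X Y Z : C} (f : X ⟶ Y) (g : Y ⟶ Z), dag (f ≫ g) = dag g ≫ dag f

notation:max f "†" => DaggerStruct.dag f

/-- A monoidal dagger category: the dagger cooperates with the monoidal structure. -/
class MonoidalDagger (C : Type u) [Category.{v} C] [MonoidalCategory C] extends
    DaggerStruct C where
  dag_tensor : ∀ {X₁ Y₁ X₂ Y₂ : C} (f : X₁ ⟶ Y₁) (g : X₂ ⟶ Y₂), (f ⊗ₘ g)† = f† ⊗ₘ g†
  assoc_unitary : ∀ X Y Z : C, ((α_ X Y Z).hom)† = (α_ X Y Z).inv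
  lunitor_unitary : ∀ X : C, ((λ_ X).hom)† = (λ_ X).inv
  runitor_unitary : ∀ X : C, ((ρ_ X).hom)† = (ρ_ X).inv

/-- A symmetric monoidal dagger category: additionally the symmetries are unitary. -/
class SymmetricDagger (C : Type u) [Category.{v} C] [MonoidalCategory C]
    [SymmetricCategory C] extends MonoidalDagger C where
  braiding_unitary : ∀ X Y : C, ((β_ X Y).hom)† = (β_ X Y).inv

/-- A monoid object, given by explicit data. -/
structure IsMonoidObj {C : Type u} [Category.{v} C] [MonoidalCategory C] (A : C)
    (m : A ⊗ A ⟶ A) (u : 𝟙_ C ⟶ A) : Prop where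
  mul_assoc : (m ⊗ₘ 𝟙 A) ≫ m = (α_ A A A).hom ≫ (𝟙 A ⊗ₘ m) ≫ m
  one_mul : (u ⊗ₘ 𝟙 A) ≫ m = (λ_ A).hom
  mul_one : (𝟙 A ⊗ₘ u) ≫ m = (ρ_ A).hom

/-- A Frobenius monoid in a monoidal dagger category. -/
structure IsFrobeniusMonoid {C : Type u} [Category.{v} C] [MonoidalCategory C]
    [MonoidalDagger C] (A : C) (m : A ⊗ A ⟶ A) (u : 𝟙_ C ⟶ A) extends
    IsMonoidObj A m u : Prop where
  frobenius : (m† ⊗ₘ 𝟙 A) ≫ (α_ A A A).hom ≫ (𝟙 A ⊗ₘ m) =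
    (𝟙 A ⊗ₘ m†) ≫ (α_ A A A).inv ≫ (m ⊗ₘ 𝟙 A)

/-- A Frobenius monad on a dagger category. -/
structure IsFrobeniusMonad {C : Type u} [Category.{v} C] [DaggerStruct C]
    (T : Monad C) : Prop where
  map_dag : ∀ {X Y : C} (f : X ⟶ Y), T.map (f†) = (T.map f)†
  frobenius : ∀ A : C,
    ((T.μ.app (T.obj A))†) ≫ T.map (T.μ.app A) =
      T.map ((T.μ.app A)†) ≫ T.μ.app (T.obj A)

/-- A Frobenius–Eilenberg–Moore (FEM-)algebra: an Eilenberg–Moore algebra `(A, a)`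
satisfying `μ_A ∘ T(a)† = T(a) ∘ μ_A†`. -/
def IsFEM {C : Type u} [Category.{v} C] [DaggerStruct C] {T : Monad C}
    (X : T.Algebra) : Prop :=
  ((T.map X.a)†) ≫ T.μ.app X.A = ((T.μ.app X.A)†) ≫ T.map X.a

/-!
For an FEM-algebra `(A, a)`, the monad unit law, naturality of `η`, `T(a†) = T(a)†` and the
FEM law give the explicit formula `a† = η_A ≫ μ_A† ≫ T a`. Every factor of that formula
commutes with an algebra morphism `f` (`η` and `μ†` by naturality, `T a` because `f` is a
morphism), so `a† ≫ T f = f ≫ b†`; taking daggers shows that `f†` is an algebra morphism.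
-/

section

variable {C : Type u} [Category.{v} C] [DaggerStruct C]

theorem DaggerStruct.dag_injective {X Y : C} : Function.Injective (dag : (X ⟶ Y) → (Y ⟶ X)) :=
  fun f g h => by rw [← dag_dag f, h, dag_dag]

open DaggerStruct

structure IsDaggerMonad (T : Monad C) : Prop where
  map_dag : ∀ {X Y : C} (f : X ⟶ Y), T.map f† = (T.map f)†

theorem IsFrobeniusMonad.isDaggerMonad {T : Monad C} (hT : IsFrobeniusMonad T) :
    IsDaggerMonad T :=
  ⟨hT.map_dag⟩

variable {T : Monad C}

theorem IsDaggerMonad.dag_μ_naturality (hT : IsDaggerMonad T) {A B : C} (f : A ⟶ B) :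
    (T.μ.app A)† ≫ T.map (T.map f) = T.map f ≫ (T.μ.app B)† := by
  apply dag_injective
  simp only [dag_comp, dag_dag, ← hT.map_dag]
  exact T.μ.naturality f†

namespace IsFEM

theorem dag_a_eq (hT : IsDaggerMonad T) {X : T.Algebra} (hX : IsFEM X) :
    X.a† = T.η.app X.A ≫ (T.μ.app X.A)† ≫ T.map X.a := by
  rw [← hX, ← hT.map_dag, ← assoc, ← T.η.naturality, assoc, Monad.left_unit, comp_id,
    Functor.id_map]

theorem dag_a_comp_map (hT : IsDaggerMonad T) {X Y : T.Algebra} (hX : IsFEM X)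
    (hY : IsFEM Y) (f : X ⟶ Y) : X.a† ≫ T.map f.f = f.f ≫ Y.a† := by
  calc X.a† ≫ T.map f.f
      = T.η.app X.A ≫ (T.μ.app X.A)† ≫ T.map (X.a ≫ f.f) := by
        rw [dag_a_eq hT hX, T.map_comp]; simp only [assoc]
    _ = T.η.app X.A ≫ ((T.μ.app X.A)† ≫ T.map (T.map f.f)) ≫ T.map Y.a := by
        rw [← f.h, T.map_comp]; simp only [assoc]
    _ = (T.η.app X.A ≫ T.map f.f) ≫ (T.μ.app Y.A)† ≫ T.map Y.a := by
        rw [hT.dag_μ_naturality]; simp only [assoc]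
    _ = f.f ≫ Y.a† := by
        rw [← T.η.naturality, dag_a_eq hT hY]; simp only [Functor.id_map, assoc]

theorem map_dag_comp_a (hT : IsDaggerMonad T) {X Y : T.Algebra} (hX : IsFEM X)
    (hY : IsFEM Y) (f : X ⟶ Y) : T.map f.f† ≫ X.a = Y.a ≫ f.f† := by
  apply dag_injective
  simpa only [dag_comp, dag_dag, hT.map_dag] using dag_a_comp_map hT hX hY f

end IsFEM

abbrev IsDaggerMonad.femDaggerStruct (hT : IsDaggerMonad T) :
    DaggerStruct (ObjectProperty.FullSubcategory fun Z : T.Algebra => IsFEM Z) where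
  dag {X Y} f := ObjectProperty.homMk
    { f := f.hom.f†
      h := IsFEM.map_dag_comp_a hT X.property Y.property f.hom }
  dag_dag f := by ext; exact dag_dag _
  dag_id X := by ext; exact dag_id _
  dag_comp f g := by ext; exact dag_comp _ _

end

/-- STATEMENT 14: for a Frobenius monad `T` on a dagger category `C`, the dagger of a
morphism of FEM-algebras is again a morphism of FEM-algebras; hence the dagger of `C`
induces a dagger on the full subcategory of FEM-algebras of the Eilenberg--Moore
category, commuting with the forgetful functor to `C`. -/
theorem fem_algebras_dagger {C : Type u} [Category.{v} C] [DaggerStruct C]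
    (T : Monad C) (hT : IsFrobeniusMonad T) :
    (∀ (X Y : T.Algebra), IsFEM X → IsFEM Y → ∀ f : X ⟶ Y,
      T.map ((f.f)†) ≫ X.a = Y.a ≫ ((f.f)†)) ∧
    ∃ ds : DaggerStruct (ObjectProperty.FullSubcategory fun Z : T.Algebra => IsFEM Z),
      ∀ (X Y : ObjectProperty.FullSubcategory fun Z : T.Algebra => IsFEM Z) (f : X ⟶ Y),
        (ds.dag f).hom.f = ((f.hom.f)†) :=
  ⟨fun _ _ hX hY f => IsFEM.map_dag_comp_a hT.isDaggerMonad hX hY f,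
    hT.isDaggerMonad.femDaggerStruct, fun _ _ _ => rfl⟩
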